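/- arXiv:2210.02481 — 6 statements merged into one kernel-verified Lean document; each statement's English description precedes it below -/
import Mathlib

section
/- Let s be a traceless invertible 2×2 matrix over K (char ≠ 2). Then conjugation by s acts on sl₂(K) as the orthogonal reflection fixing the line K·s: for all x ∈ sl₂(K), s x s⁻¹ + x = 2·(⟨s,x⟩/⟨s,s⟩)·s, where ⟨a,b⟩ = -(1/2)Tr(ab). -/
/-!
For traceless `2 × 2` matrices, Cayley–Hamilton reads `s * s = -det s • 1`, and its polarization
`s * x + x * s = tr (s * x) • 1`. Together they give `s * x * s = tr (s * x) • s + det s • x`,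
while `s⁻¹ = -(det s)⁻¹ • s`; hence `s * x * s⁻¹ = -x - (tr (s * x) / det s) • s`, and
`⟨s, s⟩ = det s` turns the coefficient into the reflection formula.
-/

namespace Matrix

variable {R : Type*} [CommRing R] {A B : Matrix (Fin 2) (Fin 2) R}

theorem mul_self_eq_neg_det_smul_one_of_trace_eq_zero (hA : A.trace = 0) :
    A * A = -A.det • (1 : Matrix (Fin 2) (Fin 2) R) := by
  have hA₁₁ : A 1 1 = -A 0 0 := by rw [trace_fin_two] at hA; linear_combination hA
  ext i j
  fin_cases i <;> fin_cases j <;> simp [mul_apply, det_fin_two, hA₁₁] <;> ring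

theorem mul_add_mul_eq_trace_smul_one_of_trace_eq_zero (hA : A.trace = 0) (hB : B.trace = 0) :
    A * B + B * A = (A * B).trace • (1 : Matrix (Fin 2) (Fin 2) R) := by
  have hA₁₁ : A 1 1 = -A 0 0 := by rw [trace_fin_two] at hA; linear_combination hA
  have hB₁₁ : B 1 1 = -B 0 0 := by rw [trace_fin_two] at hB; linear_combination hB
  ext i j
  fin_cases i <;> fin_cases j <;> simp [mul_apply, trace_fin_two, hA₁₁, hB₁₁] <;> ring

theorem mul_mul_self_of_trace_eq_zero (hA : A.trace = 0) (hB : B.trace = 0) :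
    A * B * A = (A * B).trace • A + A.det • B := by
  have hBA : B * A = (A * B).trace • 1 - A * B :=
    eq_sub_of_add_eq' (mul_add_mul_eq_trace_smul_one_of_trace_eq_zero hA hB)
  calc A * B * A = A * (B * A) := Matrix.mul_assoc _ _ _
    _ = (A * B).trace • A - A * A * B := by
      rw [hBA, Matrix.mul_sub, Matrix.mul_smul, Matrix.mul_one, Matrix.mul_assoc]
    _ = (A * B).trace • A + A.det • B := by
      rw [mul_self_eq_neg_det_smul_one_of_trace_eq_zero hA, smul_mul, Matrix.one_mul, neg_smul,
        sub_neg_eq_add]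

theorem trace_mul_self_of_trace_eq_zero (hA : A.trace = 0) :
    (A * A).trace = -2 * A.det := by
  rw [mul_self_eq_neg_det_smul_one_of_trace_eq_zero hA, trace_smul, trace_one, Fintype.card_fin,
    smul_eq_mul]
  push_cast
  ring

theorem inv_eq_neg_inv_det_smul_of_trace_eq_zero {K : Type*} [Field K]
    {A : Matrix (Fin 2) (Fin 2) K} (hA : A.trace = 0) (hdet : A.det ≠ 0) :
    A⁻¹ = -A.det⁻¹ • A := by
  refine inv_eq_left_inv ?_
  rw [smul_mul, mul_self_eq_neg_det_smul_one_of_trace_eq_zero hA, smul_smul, neg_mul_neg,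
    inv_mul_cancel₀ hdet, one_smul]

end Matrix

theorem conj_by_symmetry_is_reflection
    {K : Type*} [Field K] (h2 : (2 : K) ≠ 0)
    (s : Matrix (Fin 2) (Fin 2) K) (hs : s.trace = 0) (hds : s.det ≠ 0)
    (x : Matrix (Fin 2) (Fin 2) K) (hx : x.trace = 0) :
    s * x * s⁻¹ + x
      = (2 * (-(2⁻¹ : K) * (s * x).trace) / (-(2⁻¹ : K) * (s * s).trace)) • s := by
  have hcoef : 2 * (-(2⁻¹ : K) * (s * x).trace) / (-(2⁻¹ : K) * (s * s).trace)
      = -s.det⁻¹ * (s * x).trace := by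
    rw [Matrix.trace_mul_self_of_trace_eq_zero hs]
    field_simp
  rw [hcoef, Matrix.inv_eq_neg_inv_det_smul_of_trace_eq_zero hs hds, Matrix.mul_smul,
    Matrix.mul_mul_self_of_trace_eq_zero hs hx, smul_add, smul_smul, smul_smul]
  simp only [neg_mul, inv_mul_cancel₀ hds, neg_smul, one_smul, neg_add_cancel_right]
end

section
/- For any nonisotropic q ∈ GL₂(K) (det(q) ≠ 0), the orthogonal reflection σ_q of the quadratic space (M₂(K), det) with vector q is given by σ_q(m) = -q·m^#·q/det(q); in particular σ_q(m) = m - 2(⟨q,m⟩/⟨q,q⟩)·q for all m ∈ M₂(K). -/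
/-!
For a `2 × 2` matrix `X`, Cayley–Hamilton reads `X + X^# = tr X`. Applied to `X = q m^#`, whose
adjugate is `m^## q^# = m q^#`, and multiplied on the right by `q`, it gives
`q m^# q = tr(q m^#) q - det(q) m`. Since `⟨q, q⟩ = det q`, dividing by `-det q` turns this into
the reflection formula `m - 2 (⟨q, m⟩ / ⟨q, q⟩) q`.
-/

namespace Matrix

variable {R : Type*} [CommRing R]

theorem trace_mul_adjugate_self {n : Type*} [Fintype n] [DecidableEq n] (A : Matrix n n R) :
    (A * A.adjugate).trace = Fintype.card n * A.det := by
  rw [mul_adjugate, trace_smul, trace_one, smul_eq_mul, mul_comm]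

theorem add_adjugate_fin_two (X : Matrix (Fin 2) (Fin 2) R) : X + X.adjugate = X.trace • 1 := by
  ext i j
  fin_cases i <;> fin_cases j <;> simp [adjugate_fin_two, trace_fin_two, add_comm]

theorem adjugate_adjugate_fin_two (A : Matrix (Fin 2) (Fin 2) R) : A.adjugate.adjugate = A := by
  simp [adjugate_adjugate' A]

theorem mul_adjugate_mul_fin_two (q m : Matrix (Fin 2) (Fin 2) R) :
    q * m.adjugate * q = (q * m.adjugate).trace • q - q.det • m := by
  have hX := add_adjugate_fin_two (q * m.adjugate)
  rw [adjugate_mul_distrib, adjugate_adjugate_fin_two] at hX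
  calc q * m.adjugate * q = ((q * m.adjugate).trace • 1 - m * q.adjugate) * q :=
        congrArg (· * q) (eq_sub_of_add_eq hX)
    _ = (q * m.adjugate).trace • q - q.det • m := by
        rw [sub_mul, Matrix.mul_assoc, adjugate_mul, smul_mul, Matrix.one_mul, Matrix.mul_smul,
          Matrix.mul_one]

end Matrix

theorem reflection_formula
    {K : Type*} [Field K] (h2 : (2 : K) ≠ 0)
    (q : Matrix (Fin 2) (Fin 2) K) (hq : q.det ≠ 0)
    (m : Matrix (Fin 2) (Fin 2) K) :
    -((q.det)⁻¹ • (q * m.adjugate * q))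
      = m - (2 * ((2⁻¹ : K) * (q * m.adjugate).trace)
              / ((2⁻¹ : K) * (q * q.adjugate).trace)) • q := by
  have hcoeff : 2 * ((2⁻¹ : K) * (q * m.adjugate).trace) / ((2⁻¹ : K) * (q * q.adjugate).trace)
      = q.det⁻¹ * (q * m.adjugate).trace := by
    rw [Matrix.trace_mul_adjugate_self, Fintype.card_fin, Nat.cast_ofNat]
    field_simp
  rw [hcoeff, Matrix.mul_adjugate_mul_fin_two, smul_sub, smul_smul, smul_smul,
    inv_mul_cancel₀ hq, one_smul, neg_sub]
end

section
/- Let a, b ∈ sl₂(K) with det(a) = det(b) = -δ ≠ 0, a ≠ ±b, and set χ = (1/4)·bir(a,b) where bir(a,b) = 2δ/(δ - ⟨a,b⟩) (with ⟨a,b⟩ = -(1/2)Tr(ab), assuming ⟨a,b⟩ ≠ ±δ). Then there exists C ∈ SL₂(K) with C a C⁻¹ = b if and only if the Pell–Fermat equation x² - δy² = χ has a solution (x,y) ∈ K × K. -/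
/-!
Since `a² = b² = δ`, the matrix `G = a + b` satisfies `G a = b G`, and
`det G = 2(⟨a,b⟩ - δ) ≠ 0`. Hence the matrices conjugating `a` to `b` are exactly `G p` with `p`
in the centralizer of `a`, which (as `a² = δ ≠ 0` and `2 ≠ 0`) is `K[a] = {x + y a}`. As
`det (x + y a) = x² - δ y²`, a conjugator of determinant one exists iff the norm form represents
`(det G)⁻¹`; multiplying by the norm `-δ` of `a` turns this value into `χ`.
-/

namespace Matrix

variable {K : Type*} [Field K]

theorem mul_mul_nonsing_inv_eq_iff {n : Type*} [Fintype n] [DecidableEq n]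
    {A B C : Matrix n n K} (hC : IsUnit C.det) : C * A * C⁻¹ = B ↔ C * A = B * C := by
  constructor
  · rintro rfl
    rw [nonsing_inv_mul_cancel_right _ _ hC]
  · intro h
    rw [h, mul_nonsing_inv_cancel_right _ _ hC]

variable {a b : Matrix (Fin 2) (Fin 2) K}

theorem mul_self_of_trace_eq_zero (ha : a.trace = 0) : a * a = (-a.det) • 1 := by
  rw [trace_fin_two] at ha
  ext i j
  fin_cases i <;> fin_cases j <;>
    simp [mul_apply, det_fin_two, eq_neg_of_add_eq_zero_right ha] <;> ring

theorem mul_add_mul_of_trace_eq_zero (ha : a.trace = 0) (hb : b.trace = 0) :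
    a * b + b * a = (a * b).trace • 1 := by
  rw [trace_fin_two] at ha hb
  ext i j
  fin_cases i <;> fin_cases j <;>
    simp [mul_apply, trace_fin_two, eq_neg_of_add_eq_zero_right ha,
      eq_neg_of_add_eq_zero_right hb] <;> ring

theorem det_add_of_trace_eq_zero (ha : a.trace = 0) (hb : b.trace = 0) :
    (a + b).det = a.det + b.det - (a * b).trace := by
  rw [trace_fin_two] at ha hb
  simp [det_fin_two, trace_fin_two, mul_apply, eq_neg_of_add_eq_zero_right ha,
    eq_neg_of_add_eq_zero_right hb]
  ring

theorem det_smul_one_add_smul_of_trace_eq_zero (ha : a.trace = 0) (x y : K) :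
    (x • 1 + y • a).det = x ^ 2 + a.det * y ^ 2 := by
  rw [trace_fin_two] at ha
  simp [det_fin_two, eq_neg_of_add_eq_zero_right ha]
  ring

theorem exists_eq_smul_one_add_smul_of_commute (h2 : (2 : K) ≠ 0) (ha : a.trace = 0)
    (hda : a.det ≠ 0) {m : Matrix (Fin 2) (Fin 2) K} (hm : Commute m a) :
    ∃ x y : K, m = x • 1 + y • a := by
  have ha2 := mul_self_of_trace_eq_zero ha
  have htr_one : (1 : Matrix (Fin 2) (Fin 2) K).trace = 2 := by simp [trace_one]
  -- the coefficients are read off by taking traces of `m` and of `m * a`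
  refine ⟨m.trace / 2, -(m * a).trace / (2 * a.det), ?_⟩
  set n := m - (m.trace / 2) • 1 - (-(m * a).trace / (2 * a.det)) • a with hn
  have hn_trace : n.trace = 0 := by
    simp only [hn, trace_sub, trace_smul, htr_one, ha, smul_eq_mul]
    field_simp
    ring
  have hna_trace : (n * a).trace = 0 := by
    simp only [hn, sub_mul, smul_mul_assoc, one_mul, ha2, smul_smul, trace_sub, trace_smul,
      htr_one, ha, smul_eq_mul]
    field_simp
    ring
  have hna_comm : n * a = a * n := by
    simp only [hn, sub_mul, mul_sub, smul_mul_assoc, mul_smul_comm, one_mul, mul_one, hm.eq]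
  -- `n` commutes and anticommutes with `a`, so `n * a = 0`; as `a` is invertible, `n = 0`
  have hna : n * a = 0 := by
    have h := mul_add_mul_of_trace_eq_zero hn_trace ha
    rw [hna_trace, zero_smul, ← hna_comm, ← two_smul K] at h
    exact (smul_eq_zero.mp h).resolve_left h2
  have hn0 : n = 0 := by
    have h : n * (a * a) = 0 := by rw [← Matrix.mul_assoc, hna, zero_mul]
    rw [ha2, mul_smul_comm, mul_one] at h
    exact (smul_eq_zero.mp h).resolve_left (neg_ne_zero.mpr hda)
  rwa [hn, sub_sub, sub_eq_zero] at hn0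

theorem exists_det_eq_one_conj_iff (h2 : (2 : K) ≠ 0) {δ : K} (hδ : δ ≠ 0)
    (ha : a.trace = 0) (hda : a.det = -δ) {G : Matrix (Fin 2) (Fin 2) K}
    (hG : IsUnit G.det) (hGa : G * a = b * G) :
    (∃ C : Matrix (Fin 2) (Fin 2) K, C.det = 1 ∧ C * a * C⁻¹ = b) ↔
      ∃ x y : K, x ^ 2 - δ * y ^ 2 = G.det⁻¹ := by
  have hnorm (x y : K) : (x • 1 + y • a).det = x ^ 2 - δ * y ^ 2 := by
    rw [det_smul_one_add_smul_of_trace_eq_zero ha, hda]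
    ring
  constructor
  · rintro ⟨C, hC, hCab⟩
    rw [mul_mul_nonsing_inv_eq_iff (by simp [hC])] at hCab
    have hcomm : Commute (G⁻¹ * C) a := by
      have hGinv : G⁻¹ * b = a * G⁻¹ := by
        rw [← mul_mul_nonsing_inv_eq_iff hG] at hGa
        rw [← hGa, Matrix.mul_assoc G, nonsing_inv_mul_cancel_left _ _ hG]
      simp only [Commute, SemiconjBy, Matrix.mul_assoc, hCab]
      rw [← Matrix.mul_assoc, hGinv, Matrix.mul_assoc]
    obtain ⟨x, y, hxy⟩ :=
      exists_eq_smul_one_add_smul_of_commute h2 ha (by rw [hda]; exact neg_ne_zero.mpr hδ) hcomm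
    refine ⟨x, y, eq_inv_of_mul_eq_one_right ?_⟩
    rw [← hnorm, ← hxy, ← det_mul, mul_nonsing_inv_cancel_left _ _ hG, hC]
  · rintro ⟨x, y, hxy⟩
    have hC : (G * (x • 1 + y • a)).det = 1 := by
      rw [det_mul, hnorm, hxy, mul_inv_cancel₀ hG.ne_zero]
    refine ⟨G * (x • 1 + y • a), hC, ?_⟩
    rw [mul_mul_nonsing_inv_eq_iff (by simp [hC])]
    simp only [Matrix.mul_add, Matrix.add_mul, mul_smul_comm, smul_mul_assoc, mul_one,
      Matrix.mul_assoc, hGa]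

end Matrix

theorem exists_sq_sub_mul_sq_eq_neg_mul_iff {K : Type*} [Field K] {δ : K} (hδ : δ ≠ 0) (c : K) :
    (∃ x y : K, x ^ 2 - δ * y ^ 2 = -δ * c) ↔ ∃ x y : K, x ^ 2 - δ * y ^ 2 = c := by
  constructor
  · rintro ⟨x, y, h⟩
    refine ⟨y, x / δ, ?_⟩
    field_simp
    linear_combination -h
  · rintro ⟨x, y, h⟩
    exact ⟨δ * y, x, by linear_combination -δ * h⟩

open Matrix in
theorem sl2_conjugacy_iff_pell_fermat_general
    {K : Type*} [Field K] (h2 : (2 : K) ≠ 0)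
    (δ : K) (hδ : δ ≠ 0)
    (a b : Matrix (Fin 2) (Fin 2) K) (ha : a.trace = 0) (hb : b.trace = 0)
    (hda : a.det = -δ) (hdb : b.det = -δ)
    (hip : -(2⁻¹ : K) * (a * b).trace ≠ δ) :
    (∃ C : Matrix (Fin 2) (Fin 2) K, C.det = 1 ∧ C * a * C⁻¹ = b) ↔
      ∃ x y : K, x ^ 2 - δ * y ^ 2
        = (4⁻¹ : K) * (2 * δ / (δ - (-(2⁻¹ : K) * (a * b).trace))) := by
  set t := -(2⁻¹ : K) * (a * b).trace with ht
  have hGa : (a + b) * a = b * (a + b) := by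
    rw [Matrix.add_mul, Matrix.mul_add, mul_self_of_trace_eq_zero ha,
      mul_self_of_trace_eq_zero hb, hda, hdb, add_comm]
  have hdetG : (a + b).det = -2 * (δ - t) := by
    rw [det_add_of_trace_eq_zero ha hb, hda, hdb, ht]
    field_simp
    ring
  have hdt : δ - t ≠ 0 := sub_ne_zero.mpr hip.symm
  have hχ : -δ * (a + b).det⁻¹ = 4⁻¹ * (2 * δ / (δ - t)) := by
    rw [hdetG, show (4 : K) = 2 * 2 by norm_num]
    field_simp
  have hG : IsUnit (a + b).det := by simp [hdetG, h2, hdt]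
  rw [exists_det_eq_one_conj_iff h2 hδ ha hda hG hGa,
    ← exists_sq_sub_mul_sq_eq_neg_mul_iff hδ, hχ]

theorem sl2_conjugacy_iff_pell_fermat
    {K : Type*} [Field K] (h2 : (2 : K) ≠ 0)
    (δ : K) (hδ : δ ≠ 0)
    (a b : Matrix (Fin 2) (Fin 2) K) (ha : a.trace = 0) (hb : b.trace = 0)
    (hda : a.det = -δ) (hdb : b.det = -δ) (hab : a ≠ b) (hab' : a ≠ -b)
    (hip : -(2⁻¹ : K) * (a * b).trace ≠ δ) (hip' : -(2⁻¹ : K) * (a * b).trace ≠ -δ) :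
    (∃ C : Matrix (Fin 2) (Fin 2) K, C.det = 1 ∧ C * a * C⁻¹ = b) ↔
      ∃ x y : K, x ^ 2 - δ * y ^ 2
        = (4⁻¹ : K) * (2 * δ / (δ - (-(2⁻¹ : K) * (a * b).trace))) :=
  sl2_conjugacy_iff_pell_fermat_general h2 δ hδ a b ha hb hda hdb hip
end

section
/- Let a, b ∈ sl₂(K) with det(a) = det(b) = -δ ≠ 0, ⟨a,b⟩ ≠ ±δ. If C ∈ K[{a,b}] := {s·Id + t·{a,b} : s,t ∈ K} is invertible and satisfies C a C⁻¹ = b, then writing 4χ = bir(a,b) = 2δ/(δ-⟨a,b⟩), the element C is a solution of the form C = x(Id + b·a⁻¹) with det(C) proportional to x²; in particular a and b are conjugate by an element of SL₂(K) ∩ K[{a,b}] if and only if bir(a,b) is a nonzero square in K. -/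
/-!
For traceless `2 × 2` matrices with `det a = det b = -δ` one has `a² = b² = δ` and
`ab + ba = tr(ab)`, so `{a,b} = tr(ab)/2 - ba` and `K[{a,b}]` is spanned by `1` and `ba`.
For `C = u + v·ba` this gives `Ca - bC = (u - vδ)(a - b)`, and `a ≠ b` because
`⟨a,b⟩ ≠ -δ`; hence the intertwiners in `K[{a,b}]` are exactly
`v(δ + ba) = vδ(1 + ba⁻¹)`.
Their determinant is `v²·2δ(δ - ⟨a,b⟩)`, which equals `1` for some `v` if and only if
`bir(a,b) = 2δ/(δ - ⟨a,b⟩) = (2δv)²` is a nonzero square.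
-/

namespace Matrix

section CommRing

variable {R : Type*} [CommRing R]

theorem mul_self_eq_neg_det_smul_one_of_trace_eq_zero_s15 {a : Matrix (Fin 2) (Fin 2) R}
    (ha : a.trace = 0) : a * a = -a.det • 1 := by
  have ha' : a 1 1 = -a 0 0 := by rw [trace_fin_two] at ha; linear_combination ha
  ext i j
  fin_cases i <;> fin_cases j <;> simp [mul_apply, det_fin_two, ha'] <;> ring

theorem mul_add_mul_eq_trace_smul_one_of_trace_eq_zero_s15 {a b : Matrix (Fin 2) (Fin 2) R}
    (ha : a.trace = 0) (hb : b.trace = 0) : a * b + b * a = (a * b).trace • 1 := by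
  have ha' : a 1 1 = -a 0 0 := by rw [trace_fin_two] at ha; linear_combination ha
  have hb' : b 1 1 = -b 0 0 := by rw [trace_fin_two] at hb; linear_combination hb
  ext i j
  fin_cases i <;> fin_cases j <;> simp [mul_apply, trace_fin_two, ha', hb'] <;> ring

theorem det_smul_one_add_fin_two (u : R) (N : Matrix (Fin 2) (Fin 2) R) :
    (u • 1 + N).det = u ^ 2 + u * N.trace + N.det := by
  simp only [det_fin_two, trace_fin_two, add_apply, smul_apply, one_apply_eq, one_apply_ne,
    smul_eq_mul, mul_one, mul_zero, zero_add, ne_eq, zero_ne_one, one_ne_zero, not_false_eq_true]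
  ring

theorem smul_one_add_smul_mul_mul_sub_mul {a b : Matrix (Fin 2) (Fin 2) R} {δ : R}
    (ha : a * a = δ • 1) (hb : b * b = δ • 1) (u v : R) :
    (u • 1 + v • (b * a)) * a - b * (u • 1 + v • (b * a)) = (u - v * δ) • (a - b) := by
  have hbaa : b * a * a = δ • b := by rw [mul_assoc, ha, mul_smul_comm, mul_one]
  have hbba : b * (b * a) = δ • a := by rw [← mul_assoc, hb, smul_mul_assoc, one_mul]
  simp only [add_mul, mul_add, smul_mul_assoc, mul_smul_comm, one_mul, mul_one, hbaa, hbba]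
  module

theorem det_smul_one_add_mul {a b : Matrix (Fin 2) (Fin 2) R} {δ : R} (ha : a.det = -δ)
    (hb : b.det = -δ) : (δ • 1 + b * a).det = δ * (2 * δ + (a * b).trace) := by
  rw [det_smul_one_add_fin_two, trace_mul_comm, det_mul, ha, hb]
  ring

end CommRing

section Field

variable {K : Type*} [Field K] {a b : Matrix (Fin 2) (Fin 2) K}

theorem half_commutator_eq_of_trace_eq_zero (h2 : (2 : K) ≠ 0) (ha : a.trace = 0)
    (hb : b.trace = 0) :
    (2⁻¹ : K) • (a * b - b * a) = (2⁻¹ * (a * b).trace) • 1 - b * a := by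
  have hab := mul_add_mul_eq_trace_smul_one_of_trace_eq_zero_s15 ha hb
  rw [show a * b - b * a = (a * b + b * a) - (2 : K) • (b * a) by module, hab, smul_sub,
    smul_smul, smul_smul, inv_mul_cancel₀ h2, one_smul]

theorem exists_smul_one_add_smul_half_commutator_iff (h2 : (2 : K) ≠ 0) (ha : a.trace = 0)
    (hb : b.trace = 0) (C : Matrix (Fin 2) (Fin 2) K) :
    (∃ s t : K, C = s • 1 + t • ((2⁻¹ : K) • (a * b - b * a))) ↔
      ∃ u v : K, C = u • 1 + v • (b * a) := by
  simp only [half_commutator_eq_of_trace_eq_zero h2 ha hb]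
  set c := 2⁻¹ * (a * b).trace
  constructor
  · rintro ⟨s, t, rfl⟩
    exact ⟨s + t * c, -t, by module⟩
  · rintro ⟨u, v, rfl⟩
    exact ⟨u + v * c, -v, by module⟩

theorem smul_one_add_smul_mul_commute_iff {δ : K} (ha : a * a = δ • 1) (hb : b * b = δ • 1)
    (hab : a ≠ b) (u v : K) :
    (u • 1 + v • (b * a)) * a = b * (u • 1 + v • (b * a)) ↔ u = v * δ := by
  rw [← sub_eq_zero, smul_one_add_smul_mul_mul_sub_mul ha hb, smul_eq_zero,
    sub_eq_zero, sub_eq_zero, or_iff_left hab]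

theorem exists_smul_one_add_smul_mul_and_commute_iff {δ : K} (ha : a * a = δ • 1)
    (hb : b * b = δ • 1) (hab : a ≠ b) (C : Matrix (Fin 2) (Fin 2) K) :
    (∃ u v : K, C = u • 1 + v • (b * a)) ∧ C * a = b * C ↔
      ∃ v : K, C = v • (δ • 1 + b * a) := by
  constructor
  · rintro ⟨⟨u, v, rfl⟩, hC⟩
    rw [smul_one_add_smul_mul_commute_iff ha hb hab] at hC
    exact ⟨v, by rw [hC, smul_add, smul_smul]⟩
  · rintro ⟨v, rfl⟩
    rw [smul_add, smul_smul]
    exact ⟨⟨_, _, rfl⟩, (smul_one_add_smul_mul_commute_iff ha hb hab _ _).2 rfl⟩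

theorem inv_eq_inv_smul_of_mul_self_eq {δ : K} (hδ : δ ≠ 0) (ha : a * a = δ • 1) :
    a⁻¹ = δ⁻¹ • a :=
  inv_eq_right_inv (by rw [mul_smul_comm, ha, smul_smul, inv_mul_cancel₀ hδ, one_smul])

end Field

end Matrix

theorem exists_sq_mul_mul_eq_one_iff {K : Type*} [Field K] (p q : K) :
    (∃ v : K, v ^ 2 * (p * q) = 1) ↔ ∃ x : K, x ≠ 0 ∧ p / q = x ^ 2 := by
  constructor
  · rintro ⟨v, hv⟩
    have hp : p ≠ 0 := by rintro rfl; simp at hv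
    have hq : q ≠ 0 := by rintro rfl; simp at hv
    have hv0 : v ≠ 0 := by rintro rfl; simp at hv
    refine ⟨p * v, mul_ne_zero hp hv0, ?_⟩
    field_simp
    linear_combination -hv
  · rintro ⟨x, hx, hpq⟩
    have hpq0 : p / q ≠ 0 := hpq ▸ pow_ne_zero 2 hx
    have hp : p ≠ 0 := by rintro rfl; simp at hpq0
    have hq : q ≠ 0 := by rintro rfl; simp at hpq0
    refine ⟨x / p, ?_⟩
    field_simp
    rw [div_eq_iff hq] at hpq
    exact hpq.symm

open Matrix in
theorem conjugacy_in_Kab_iff_bir_square_general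
    {K : Type*} [Field K] (h2 : (2 : K) ≠ 0)
    (δ : K) (hδ : δ ≠ 0)
    (a b : Matrix (Fin 2) (Fin 2) K) (ha : a.trace = 0) (hb : b.trace = 0)
    (hda : a.det = -δ) (hdb : b.det = -δ)
    (hip' : -(2⁻¹ : K) * (a * b).trace ≠ -δ) :
    (∀ s t : K,
      IsUnit ((s • (1 : Matrix (Fin 2) (Fin 2) K) + t • ((2⁻¹ : K) • (a * b - b * a))).det) →
      (s • (1 : Matrix (Fin 2) (Fin 2) K) + t • ((2⁻¹ : K) • (a * b - b * a))) * a
        = b * (s • (1 : Matrix (Fin 2) (Fin 2) K) + t • ((2⁻¹ : K) • (a * b - b * a))) →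
      ∃ x : K, s • (1 : Matrix (Fin 2) (Fin 2) K) + t • ((2⁻¹ : K) • (a * b - b * a))
        = x • (1 + b * a⁻¹)) ∧
    ((∃ C : Matrix (Fin 2) (Fin 2) K,
        (∃ s t : K, C = s • (1 : Matrix (Fin 2) (Fin 2) K)
          + t • ((2⁻¹ : K) • (a * b - b * a))) ∧
        C.det = 1 ∧ C * a = b * C) ↔
      ∃ x : K, x ≠ 0 ∧ 2 * δ / (δ - (-(2⁻¹ : K) * (a * b).trace)) = x ^ 2) := by
  have ha2 : a * a = δ • 1 := by
    rw [mul_self_eq_neg_det_smul_one_of_trace_eq_zero_s15 ha, hda, neg_neg]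
  have hb2 : b * b = δ • 1 := by
    rw [mul_self_eq_neg_det_smul_one_of_trace_eq_zero_s15 hb, hdb, neg_neg]
  have hab : a ≠ b := by
    rintro rfl
    apply hip'
    rw [ha2, trace_smul, trace_one, Fintype.card_fin, smul_eq_mul]
    field_simp
    ring
  have hsol (C : Matrix (Fin 2) (Fin 2) K) :
      ((∃ s t : K, C = s • 1 + t • ((2⁻¹ : K) • (a * b - b * a))) ∧ C * a = b * C) ↔
        ∃ v : K, C = v • (δ • 1 + b * a) :=
    ((exists_smul_one_add_smul_half_commutator_iff h2 ha hb C).and Iff.rfl).trans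
      (exists_smul_one_add_smul_mul_and_commute_iff ha2 hb2 hab C)
  refine ⟨fun s t _ hC => ?_, ?_⟩
  · obtain ⟨v, hv⟩ := (hsol _).1 ⟨⟨s, t, rfl⟩, hC⟩
    refine ⟨v * δ, ?_⟩
    rw [hv, inv_eq_inv_smul_of_mul_self_eq hδ ha2, mul_smul_comm]
    match_scalars <;> field_simp
  calc _ ↔ ∃ v : K, (v • (δ • 1 + b * a)).det = 1 := by
        constructor
        · rintro ⟨C, hK, hdet, hC⟩
          obtain ⟨v, rfl⟩ := (hsol C).1 ⟨hK, hC⟩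
          exact ⟨v, hdet⟩
        · rintro ⟨v, hdet⟩
          obtain ⟨hK, hC⟩ := (hsol _).2 ⟨v, rfl⟩
          exact ⟨_, hK, hdet, hC⟩
    _ ↔ ∃ v : K, v ^ 2 * (2 * δ * (δ - (-(2⁻¹ : K) * (a * b).trace))) = 1 := by
        have hdet :
            2 * δ * (δ - (-(2⁻¹ : K) * (a * b).trace)) = δ * (2 * δ + (a * b).trace) := by
          field_simp
          ring
        simp only [det_smul, Fintype.card_fin, det_smul_one_add_mul hda hdb, hdet]
    _ ↔ _ := exists_sq_mul_mul_eq_one_iff _ _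

theorem conjugacy_in_Kab_iff_bir_square
    {K : Type*} [Field K] (h2 : (2 : K) ≠ 0)
    (δ : K) (hδ : δ ≠ 0)
    (a b : Matrix (Fin 2) (Fin 2) K) (ha : a.trace = 0) (hb : b.trace = 0)
    (hda : a.det = -δ) (hdb : b.det = -δ)
    (hip : -(2⁻¹ : K) * (a * b).trace ≠ δ) (hip' : -(2⁻¹ : K) * (a * b).trace ≠ -δ) :
    (∀ s t : K,
      IsUnit ((s • (1 : Matrix (Fin 2) (Fin 2) K) + t • ((2⁻¹ : K) • (a * b - b * a))).det) →
      (s • (1 : Matrix (Fin 2) (Fin 2) K) + t • ((2⁻¹ : K) • (a * b - b * a))) * a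
        = b * (s • (1 : Matrix (Fin 2) (Fin 2) K) + t • ((2⁻¹ : K) • (a * b - b * a))) →
      ∃ x : K, s • (1 : Matrix (Fin 2) (Fin 2) K) + t • ((2⁻¹ : K) • (a * b - b * a))
        = x • (1 + b * a⁻¹)) ∧
    ((∃ C : Matrix (Fin 2) (Fin 2) K,
        (∃ s t : K, C = s • (1 : Matrix (Fin 2) (Fin 2) K)
          + t • ((2⁻¹ : K) • (a * b - b * a))) ∧
        C.det = 1 ∧ C * a = b * C) ↔
      ∃ x : K, x ≠ 0 ∧ 2 * δ / (δ - (-(2⁻¹ : K) * (a * b).trace)) = x ^ 2) :=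
  conjugacy_in_Kab_iff_bir_square_general h2 δ hδ a b ha hb hda hdb hip'
end

section
/- Let a, b ∈ sl₂(K) with det(a) = det(b) = -δ ≠ 0 and ⟨a,b⟩ ≠ ±δ, and set C = (1/2)√(bir(a,b))·(Id + b·a⁻¹) over an extension of K containing √(bir(a,b)), where bir(a,b) = 2δ/(δ-⟨a,b⟩). Then C² = b·a⁻¹ and det(C) = 1. -/
/-! By Cayley–Hamilton, a 2×2 matrix `M` with `det M = 1` satisfies `M² = (tr M) M - 1`, so
`(1 + M)² = (2 + tr M) M` and `det (1 + M) = 2 + tr M`; hence `s (1 + M)` is a square root of `M`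
of determinant one as soon as `s² (2 + tr M) = 1`. For `M = b a⁻¹` with `a` traceless,
`adj a = -a` gives `a⁻¹ = a / δ`, so `tr M = tr (a b) / δ` and `2 + tr M = 4 / bir(a, b)`. -/

namespace Matrix

variable {R : Type*} [CommRing R]

theorem mul_self_fin_two (M : Matrix (Fin 2) (Fin 2) R) :
    M * M = M.trace • M - M.det • 1 := by
  ext i j
  fin_cases i <;> fin_cases j <;>
    simp [mul_apply, Fin.sum_univ_succ, trace_fin_two, det_fin_two] <;> ring

theorem det_one_add_fin_two (M : Matrix (Fin 2) (Fin 2) R) :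
    (1 + M).det = 1 + M.trace + M.det := by
  simp only [det_fin_two, trace_fin_two, add_apply, one_apply_eq, one_apply_ne, zero_ne_one,
    one_ne_zero, ne_eq, not_false_eq_true, zero_add]
  ring

theorem smul_one_add_mul_self_of_det_eq_one {M : Matrix (Fin 2) (Fin 2) R} (hM : M.det = 1)
    {s : R} (hs : s ^ 2 * (2 + M.trace) = 1) :
    (s • (1 + M)) * (s • (1 + M)) = M := by
  have hsq : (1 + M) * (1 + M) = (2 + M.trace) • M := by
    rw [add_mul, mul_add, mul_add, mul_self_fin_two M, hM]
    simp only [one_mul, mul_one, one_smul]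
    module
  rw [smul_mul_smul_comm, hsq, smul_smul, ← sq, hs, one_smul]

theorem det_smul_one_add_of_det_eq_one {M : Matrix (Fin 2) (Fin 2) R} (hM : M.det = 1)
    {s : R} (hs : s ^ 2 * (2 + M.trace) = 1) :
    (s • (1 + M)).det = 1 := by
  rw [det_smul, det_one_add_fin_two, hM, Fintype.card_fin]
  linear_combination hs

theorem inv_eq_smul_of_trace_eq_zero {K : Type*} [Field K] {a : Matrix (Fin 2) (Fin 2) K}
    (ha : a.trace = 0) : a⁻¹ = (-a.det)⁻¹ • a := by
  have hadj : a.adjugate = -a := by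
    rw [trace_fin_two] at ha
    ext i j
    fin_cases i <;> fin_cases j <;> simp [adjugate_fin_two] <;> linear_combination ha
  rw [inv_def, hadj, Ring.inverse_eq_inv, inv_neg, neg_smul, smul_neg]

theorem det_mul_inv_of_det_eq {n K : Type*} [Fintype n] [DecidableEq n] [Field K]
    {a b : Matrix n n K} (hab : b.det = a.det) (ha : a.det ≠ 0) : (b * a⁻¹).det = 1 := by
  rw [det_mul, det_nonsing_inv, Ring.inverse_eq_inv, hab, mul_inv_cancel₀ ha]

theorem trace_mul_inv_of_trace_eq_zero {K : Type*} [Field K] {a : Matrix (Fin 2) (Fin 2) K}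
    (ha : a.trace = 0) (b : Matrix (Fin 2) (Fin 2) K) :
    (b * a⁻¹).trace = (-a.det)⁻¹ * (a * b).trace := by
  rw [inv_eq_smul_of_trace_eq_zero ha, Matrix.mul_smul, trace_smul, trace_mul_comm, smul_eq_mul]

end Matrix

open Matrix in
theorem sqrt_bir_gives_square_root_of_ba_inv_general
    {K : Type*} [Field K] (h2 : (2 : K) ≠ 0)
    {L : Type*} [Field L] [Algebra K L]
    (δ : K) (hδ : δ ≠ 0)
    (a b : Matrix (Fin 2) (Fin 2) K) (ha : a.trace = 0)
    (hda : a.det = -δ) (hdb : b.det = -δ)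
    (hip : -(2⁻¹ : K) * (a * b).trace ≠ δ)
    (r : L) (hr : r ^ 2 = algebraMap K L (2 * δ / (δ - (-(2⁻¹ : K) * (a * b).trace)))) :
    (((2⁻¹ : L) * r) • (1 + (b.map (algebraMap K L)) * (a.map (algebraMap K L))⁻¹))
      * (((2⁻¹ : L) * r) • (1 + (b.map (algebraMap K L)) * (a.map (algebraMap K L))⁻¹))
      = (b.map (algebraMap K L)) * (a.map (algebraMap K L))⁻¹ ∧
    (((2⁻¹ : L) * r) • (1 + (b.map (algebraMap K L)) * (a.map (algebraMap K L))⁻¹)).det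
      = 1 := by
  set φ := algebraMap K L
  have hdet_map (m : Matrix (Fin 2) (Fin 2) K) : (m.map φ).det = φ m.det :=
    (φ.map_det m).symm
  have hdet : (b.map φ * (a.map φ)⁻¹).det = 1 :=
    det_mul_inv_of_det_eq (by rw [hdet_map, hdet_map, hda, hdb])
      (by rw [hdet_map, hda]; simpa using hδ)
  have htrace : (b.map φ * (a.map φ)⁻¹).trace = φ (δ⁻¹ * (a * b).trace) := by
    rw [trace_mul_inv_of_trace_eq_zero (by rw [← AddMonoidHom.map_trace, ha, map_zero]),
      hdet_map, ← Matrix.map_mul, ← AddMonoidHom.map_trace, hda, map_neg, neg_neg, map_mul,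
      map_inv₀]
  have hscalar : (2⁻¹ : K) ^ 2 * (2 * δ / (δ - (-(2⁻¹ : K) * (a * b).trace)))
      * (2 + δ⁻¹ * (a * b).trace) = 1 := by
    have hden : δ * 2 + (a * b).trace ≠ 0 := by
      contrapose! hip
      field_simp
      linear_combination -hip
    field_simp
    linear_combination mul_inv_cancel₀ hden
  have hs : (2⁻¹ * r) ^ 2 * (2 + (b.map φ * (a.map φ)⁻¹).trace) = 1 := by
    rw [htrace, ← map_one φ, ← hscalar]
    simp only [map_mul, map_pow, map_inv₀, map_ofNat, map_add, ← hr]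
    ring
  exact ⟨smul_one_add_mul_self_of_det_eq_one hdet hs, det_smul_one_add_of_det_eq_one hdet hs⟩

theorem sqrt_bir_gives_square_root_of_ba_inv
    {K : Type*} [Field K] (h2 : (2 : K) ≠ 0)
    {L : Type*} [Field L] [Algebra K L]
    (δ : K) (hδ : δ ≠ 0)
    (a b : Matrix (Fin 2) (Fin 2) K) (ha : a.trace = 0) (hb : b.trace = 0)
    (hda : a.det = -δ) (hdb : b.det = -δ)
    (hip : -(2⁻¹ : K) * (a * b).trace ≠ δ) (hip' : -(2⁻¹ : K) * (a * b).trace ≠ -δ)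
    (r : L) (hr : r ^ 2 = algebraMap K L (2 * δ / (δ - (-(2⁻¹ : K) * (a * b).trace)))) :
    (((2⁻¹ : L) * r) • (1 + (b.map (algebraMap K L)) * (a.map (algebraMap K L))⁻¹))
      * (((2⁻¹ : L) * r) • (1 + (b.map (algebraMap K L)) * (a.map (algebraMap K L))⁻¹))
      = (b.map (algebraMap K L)) * (a.map (algebraMap K L))⁻¹ ∧
    (((2⁻¹ : L) * r) • (1 + (b.map (algebraMap K L)) * (a.map (algebraMap K L))⁻¹)).det
      = 1 :=
  sqrt_bir_gives_square_root_of_ba_inv_general h2 δ hδ a b ha hda hdb hip r hr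
end

section
/- Define ψ: K² → sl₂(K) by ψ(v) = the matrix of the map w ↦ det(w,v)·v (a rank-one nilpotent endomorphism when v ≠ 0). Then ψ is two-to-one outside the origin (ψ(u) = ψ(v) with u,v ≠ 0 iff u = ±v), ψ(Cv) = C·ψ(v)·C⁻¹ for all C ∈ SL₂(K), and 2⟨ψ(u), ψ(v)⟩ = det(u,v)² where ⟨a,b⟩ = -(1/2)Tr(ab). -/
/-!
Writing `J = !![0, -1; 1, 0]`, the functional `w ↦ det(w, v)` is the row vector `v ᵥ* J`, so
`ψ(v) = v vᵀ J`. Since `J² = -1`, `ψ(u) = ψ(v)` amounts to `u uᵀ = v vᵀ`, which forces `u = ±v`.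
Equivariance comes from `Cᵀ J C = det C • J`, giving `ψ(C v) C = det C • C ψ(v)`, and the trace
formula from `tr(u aᵀ v bᵀ) = (a ⬝ v)(b ⬝ u)`.
-/

/-- The quadratic map `ψ : K² → sl₂(K)`, `ψ(v)` is the matrix of `w ↦ det(w,v)·v`. -/
def psi {K : Type*} [Field K] (v : Fin 2 → K) : Matrix (Fin 2) (Fin 2) K :=
  Matrix.vecMulVec v ![v 1, -v 0]

open Matrix

theorem Matrix.vecMulVec_self_inj {R ι : Type*} [CommRing R] [IsDomain R] {u v : ι → R} :
    vecMulVec u u = vecMulVec v v ↔ u = v ∨ u = -v := by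
  refine ⟨fun h => ?_, ?_⟩
  · have huv (i j : ι) : u i * u j = v i * v j := by
      simpa only [vecMulVec_apply] using congrFun (congrFun h i) j
    by_cases hu : u = 0
    · subst hu
      refine Or.inl (funext fun i => ?_)
      simpa [eq_comm] using huv i i
    obtain ⟨i, hi⟩ := Function.ne_iff.mp hu
    rcases mul_self_eq_mul_self_iff.mp (huv i i) with hvi | hvi
    · refine Or.inl (funext fun j => mul_left_cancel₀ hi ?_)
      rw [huv, hvi]
    · refine Or.inr (funext fun j => mul_left_cancel₀ hi ?_)
      rw [huv, hvi, Pi.neg_apply]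
      ring
  · rintro (rfl | rfl) <;> simp

section Symplectic

variable {R : Type*} [CommRing R]

variable (R) in
def stdSymplectic : Matrix (Fin 2) (Fin 2) R := !![0, -1; 1, 0]

theorem stdSymplectic_mul_self : stdSymplectic R * stdSymplectic R = -1 := by
  ext i j; fin_cases i <;> fin_cases j <;> simp [stdSymplectic]

theorem transpose_mul_stdSymplectic_mul (C : Matrix (Fin 2) (Fin 2) R) :
    Cᵀ * stdSymplectic R * C = C.det • stdSymplectic R := by
  ext i j; fin_cases i <;> fin_cases j <;>
    simp only [stdSymplectic, det_fin_two, mul_apply, transpose_apply, of_apply, cons_val',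
      cons_val_fin_one, Fin.sum_univ_two, cons_val_zero, cons_val_one, Fin.mk_one, Fin.zero_eta,
      Fin.isValue, Matrix.smul_apply, smul_eq_mul] <;> ring

theorem vecMul_stdSymplectic_dotProduct (v w : Fin 2 → R) :
    v ᵥ* stdSymplectic R ⬝ᵥ w = w 0 * v 1 - w 1 * v 0 := by
  simp only [dotProduct, vecMul, stdSymplectic, of_apply, cons_val', cons_val_fin_one,
    Fin.sum_univ_two, cons_val_zero, cons_val_one, mul_zero, mul_one, zero_add, mul_neg, add_zero,
    neg_mul]
  ring

end Symplectic

section Psi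

variable {K : Type*} [Field K]

theorem psi_eq_vecMulVec_mul (v : Fin 2 → K) : psi v = vecMulVec v v * stdSymplectic K := by
  ext i j; fin_cases i <;> fin_cases j <;>
    simp [psi, stdSymplectic, vecMulVec_apply, mul_apply, Fin.sum_univ_two]

theorem psi_eq_vecMulVec (v : Fin 2 → K) : psi v = vecMulVec v (v ᵥ* stdSymplectic K) := by
  rw [psi_eq_vecMulVec_mul, vecMulVec_mul]

theorem psi_inj {u v : Fin 2 → K} : psi u = psi v ↔ u = v ∨ u = -v := by
  rw [← vecMulVec_self_inj, psi_eq_vecMulVec_mul, psi_eq_vecMulVec_mul]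
  refine ⟨fun h => ?_, fun h => h ▸ rfl⟩
  simpa [Matrix.mul_assoc, stdSymplectic_mul_self] using congrArg (· * stdSymplectic K) h

theorem psi_mulVec_mul (C : Matrix (Fin 2) (Fin 2) K) (v : Fin 2 → K) :
    psi (C *ᵥ v) * C = C.det • (C * psi v) := by
  rw [psi_eq_vecMulVec, psi_eq_vecMulVec, vecMulVec_mul, vecMul_vecMul, vecMul_mulVec,
    ← Matrix.mul_assoc, transpose_mul_stdSymplectic_mul, vecMul_smul, vecMulVec_smul,
    mul_vecMulVec]

theorem psi_mulVec_of_det_eq_one {C : Matrix (Fin 2) (Fin 2) K} (hC : C.det = 1)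
    (v : Fin 2 → K) : psi (C *ᵥ v) = C * psi v * C⁻¹ := by
  have h := psi_mulVec_mul C v
  rw [hC, one_smul] at h
  rw [← h, mul_nonsing_inv_cancel_right _ _ (by simp [hC])]

theorem trace_psi_mul_psi (u v : Fin 2 → K) :
    (psi u * psi v).trace = -(u 0 * v 1 - u 1 * v 0) ^ 2 := by
  rw [psi_eq_vecMulVec, psi_eq_vecMulVec, vecMulVec_mul_vecMulVec, trace_vecMulVec,
    dotProduct_smul, vecMul_stdSymplectic_dotProduct, smul_eq_mul, dotProduct_comm,
    vecMul_stdSymplectic_dotProduct]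
  ring

end Psi

theorem psi_properties
    {K : Type*} [Field K] (h2 : (2 : K) ≠ 0) :
    (∀ u v : Fin 2 → K, u ≠ 0 → v ≠ 0 → (psi u = psi v ↔ u = v ∨ u = -v)) ∧
    (∀ C : Matrix (Fin 2) (Fin 2) K, C.det = 1 →
      ∀ v : Fin 2 → K, psi (C.mulVec v) = C * psi v * C⁻¹) ∧
    (∀ u v : Fin 2 → K,
      2 * (-(2⁻¹ : K) * (psi u * psi v).trace) = (u 0 * v 1 - u 1 * v 0) ^ 2) := by
  refine ⟨fun u v _ _ => psi_inj, fun C hC => psi_mulVec_of_det_eq_one hC, fun u v => ?_⟩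
  rw [trace_psi_mul_psi, neg_mul_neg, ← mul_assoc, mul_inv_cancel₀ h2, one_mul]
end
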